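/- The joint quantities p_n(i,j) satisfy the recurrences: p_n(0,j) = ((n-2)/n)·p_{n-1}(0,j) + (1/n)·g_{n-1}(j-1), and p_n(i,j) = ((n-2)/n)·p_{n-1}(i,j) + (1/n)·p_{n-1}(i-1,j) for i ≥ 1, valid for n ≥ 3 and 0 ≤ i,j ≤ n-1, where g_{n-1}(j-1) = Σ_{i=0}^{n-2} p_{n-1}(i, j-1) and p_{n-1}(i,-1) = 0. -/

import Mathlib

open Finset

/-- Sample space of a random recursive tree with `m + 1` nodes labelled `0, …, m`:
node `k + 1` attaches by a directed edge from a parent chosen in `{0, …, k}`.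
The uniform measure on this product type makes each parent choice independent
and uniform, which is exactly the sequential growth model. -/
def Omega (m : ℕ) : Type := ∀ k : Fin m, Fin (k.val + 1)

instance (m : ℕ) : Fintype (Omega m) := by unfold Omega; infer_instance

instance (m : ℕ) : Nonempty (Omega m) := by unfold Omega; infer_instance

/-- The number of children of node `v` in the outcome `ω`. -/
def childCount {m : ℕ} (ω : Omega m) (v : ℕ) : ℕ :=
  (Finset.univ.filter (fun k : Fin m => ((ω k).val = v))).card

/-- `C_n(i)`: the number of nodes having exactly `i` children. -/
def numChildEq (m : ℕ) (ω : Omega m) (i : ℕ) : ℕ :=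
  ((Finset.range (m + 1)).filter (fun v => childCount ω v = i)).card

/-- The generation (depth) of node `v`: the root `0` has depth `0`, and a node's
depth is one more than its parent's depth. -/
def depth {m : ℕ} (ω : Omega m) : ℕ → ℕ
  | 0 => 0
  | (j + 1) => if h : j < m then depth ω (ω ⟨j, h⟩).val + 1 else 0
  decreasing_by exact (ω ⟨j, h⟩).isLt

/-- `G_n(j)`: the number of nodes at generation `j`. -/
def numGenEq (m : ℕ) (ω : Omega m) (j : ℕ) : ℕ :=
  ((Finset.range (m + 1)).filter (fun v => depth ω v = j)).card

/-- `L_n(i,j)`: the number of nodes with `i` children lying at generation `j`. -/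
def numJointEq (m : ℕ) (ω : Omega m) (i j : ℕ) : ℕ :=
  ((Finset.range (m + 1)).filter (fun v => childCount ω v = i ∧ depth ω v = j)).card

/-- Expectation with respect to the uniform distribution on `Omega m`. -/
noncomputable def treeExpect (m : ℕ) (f : Omega m → ℝ) : ℝ :=
  (∑ ω : Omega m, f ω) / (Fintype.card (Omega m))

/-- `c_n(i) = E[C_n(i)]/n`, the expected proportion of nodes with `i` children
in the random recursive tree on `n` nodes. -/
noncomputable def c (n i : ℕ) : ℝ :=
  treeExpect (n - 1) (fun ω => (numChildEq (n - 1) ω i : ℝ)) / n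

/-- `g_n(j) = E[G_n(j)]/n`, the expected proportion of nodes at generation `j`. -/
noncomputable def g (n j : ℕ) : ℝ :=
  treeExpect (n - 1) (fun ω => (numGenEq (n - 1) ω j : ℝ)) / n

/-- `p_n(i,j) = E[L_n(i,j)]/n`, the expected proportion of nodes with `i`
children at generation `j`. -/
noncomputable def p (n i j : ℕ) : ℝ :=
  treeExpect (n - 1) (fun ω => (numJointEq (n - 1) ω i j : ℝ)) / n

/-! Every tree on `m + 2` nodes arises from a unique tree on `m + 1` nodes by attaching node
`m + 1` to one of the `m + 1` old nodes `u`, so averaging over `u` gives the expectation.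
Attaching to `u` moves `u` from class `(i, j)` to class `(i + 1, j)` and creates a leaf of class
`(0, depth u + 1)`. Summing over `u`, a node of class `(i, j)` stays there for `m` of the choices,
and the class `(i, j)` gains one node for each node of class `(i - 1, j)` (if `i ≥ 1`) or each node
at depth `j - 1` (if `i = 0`, `j ≥ 1`). Dividing by `(m + 1)(m + 2)` gives the recurrences. -/

open scoped BigOperators

lemma Fin.sum_ite_eq_add_nsmul {M : Type*} [AddCommMonoid M] {m : ℕ} (v : Fin (m + 1))
    (a b : M) : ∑ u : Fin (m + 1), (if u = v then a else b) = a + m • b := by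
  simp [sum_ite, filter_eq', filter_ne', card_erase_of_mem]

namespace Omega

def snoc {m : ℕ} (ω : Omega m) (u : Fin (m + 1)) : Omega (m + 1) :=
  Fin.snoc (α := fun k : Fin (m + 1) => Fin (k.val + 1)) (fun k => ω k) u

def snocEquiv (m : ℕ) : Fin (m + 1) × Omega m ≃ Omega (m + 1) :=
  Fin.snocEquiv (fun k : Fin (m + 1) => Fin (k.val + 1))

@[simp] lemma snoc_castSucc {m : ℕ} (ω : Omega m) (u : Fin (m + 1)) (k : Fin m) :
    (ω.snoc u k.castSucc).val = (ω k).val := by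
  rw [snoc, Fin.snoc_castSucc]

@[simp] lemma snoc_last {m : ℕ} (ω : Omega m) (u : Fin (m + 1)) :
    (ω.snoc u (Fin.last m)).val = u.val := by
  rw [snoc, Fin.snoc_last]

lemma expect_succ (m : ℕ) (f : Omega (m + 1) → ℝ) :
    𝔼 ω, f ω = 𝔼 ω : Omega m, 𝔼 u, f (ω.snoc u) := by
  rw [← Fintype.expect_equiv (snocEquiv m) (fun x => f (x.2.snoc x.1)) f fun _ => rfl,
    ← univ_product_univ, expect_product, expect_comm]

end Omega

section Growth

variable {m : ℕ}

lemma childCount_snoc (ω : Omega m) (u : Fin (m + 1)) (v : ℕ) :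
    childCount (ω.snoc u) v = childCount ω v + if u.val = v then 1 else 0 := by
  simp only [childCount, card_filter, Fin.sum_univ_castSucc, Omega.snoc_castSucc,
    Omega.snoc_last]

lemma childCount_le (ω : Omega m) (v : ℕ) : childCount ω v ≤ m :=
  (card_filter_le _ _).trans_eq (card_fin m)

lemma childCount_eq_zero_of_le (ω : Omega m) {v : ℕ} (hv : m ≤ v) : childCount ω v = 0 := by
  refine card_eq_zero.2 (filter_eq_empty_iff.2 fun k _ => ?_)
  have := (ω k).isLt
  omega

lemma depth_snoc_of_le (ω : Omega m) (u : Fin (m + 1)) {v : ℕ} (hv : v ≤ m) :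
    depth (ω.snoc u) v = depth ω v := by
  induction v using Nat.strong_induction_on with
  | _ v ih =>
    match v with
    | 0 => simp [depth]
    | w + 1 =>
      have hw : w < m := by omega
      have hparent : (ω.snoc u ⟨w, by omega⟩).val = (ω ⟨w, hw⟩).val :=
        Omega.snoc_castSucc ω u ⟨w, hw⟩
      have := (ω ⟨w, hw⟩).isLt
      rw [depth, depth, dif_pos (by omega), dif_pos hw, hparent, ih _ (by omega) (by omega)]

lemma depth_snoc_last (ω : Omega m) (u : Fin (m + 1)) :
    depth (ω.snoc u) (m + 1) = depth ω u + 1 := by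
  rw [depth, dif_pos m.lt_succ_self, ← Fin.last, Omega.snoc_last,
    depth_snoc_of_le _ _ (Nat.lt_succ_iff.1 u.isLt)]

lemma sum_numJointEq (ω : Omega m) (j : ℕ) :
    ∑ i ∈ range (m + 1), numJointEq m ω i j = numGenEq m ω j := by
  simp only [numJointEq, numGenEq, card_filter]
  rw [sum_comm]
  refine sum_congr rfl fun v _ => ?_
  by_cases hd : depth ω v = j
  · simp [hd, Nat.lt_succ_of_le (childCount_le ω v)]
  · simp [hd]

/-- The number of nodes that, chosen as the parent of the next node, give the class `(i, j)` a new
member: the parent itself if it is of class `(i - 1, j)`, the new leaf if `(i, j) = (0, depth + 1)`. -/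
def inflow (ω : Omega m) (i j : ℕ) : ℕ :=
  #{v ∈ range (m + 1) | childCount ω v + 1 = i ∧ depth ω v = j} +
    #{v ∈ range (m + 1) | i = 0 ∧ depth ω v + 1 = j}

lemma inflow_zero_zero (ω : Omega m) : inflow ω 0 0 = 0 := by
  simp [inflow]

lemma inflow_zero_succ (ω : Omega m) (j : ℕ) : inflow ω 0 (j + 1) = numGenEq m ω j := by
  simp [inflow, numGenEq]

lemma inflow_succ (ω : Omega m) (i j : ℕ) : inflow ω (i + 1) j = numJointEq m ω i j := by
  simp [inflow, numJointEq]

lemma numJointEq_snoc (ω : Omega m) (u : Fin (m + 1)) (i j : ℕ) :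
    numJointEq (m + 1) (ω.snoc u) i j =
      (∑ v : Fin (m + 1), if u = v then (if childCount ω v + 1 = i ∧ depth ω v = j then 1 else 0)
        else (if childCount ω v = i ∧ depth ω v = j then 1 else 0)) +
      if i = 0 ∧ depth ω u + 1 = j then 1 else 0 := by
  rw [numJointEq, card_filter, sum_range_succ, ← Fin.sum_univ_eq_sum_range]
  congr 1
  · refine sum_congr rfl fun v _ => ?_
    rw [childCount_snoc, depth_snoc_of_le _ _ (Nat.lt_succ_iff.1 v.isLt)]
    by_cases h : u = v <;> simp [h, Fin.val_ne_of_ne]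
  · have hu : (u : ℕ) ≠ m + 1 := by omega
    rw [childCount_snoc, childCount_eq_zero_of_le _ (by omega), if_neg hu, depth_snoc_last]
    simp [eq_comm]

lemma sum_numJointEq_snoc (ω : Omega m) (i j : ℕ) :
    ∑ u, numJointEq (m + 1) (ω.snoc u) i j = m * numJointEq m ω i j + inflow ω i j := by
  simp only [numJointEq_snoc, sum_add_distrib]
  rw [sum_comm]
  simp only [Fin.sum_ite_eq_add_nsmul, sum_add_distrib, inflow, numJointEq, card_filter,
    smul_eq_mul, ← mul_sum, ← Fin.sum_univ_eq_sum_range]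
  ring

end Growth

lemma p_succ (m i j : ℕ) :
    p (m + 1) i j = (𝔼 ω : Omega m, (numJointEq m ω i j : ℝ)) / (m + 1) := by
  rw [p, Nat.add_sub_cancel, treeExpect, ← Fintype.expect_eq_sum_div_card]
  push_cast
  rfl

lemma sum_p_succ (m j : ℕ) :
    ∑ i ∈ range (m + 1), p (m + 1) i j = (𝔼 ω : Omega m, (numGenEq m ω j : ℝ)) / (m + 1) := by
  simp only [p_succ, ← sum_div, ← expect_sum_comm, ← Nat.cast_sum, sum_numJointEq]

lemma p_add_two (m i j : ℕ) :
    p (m + 2) i j = m / (m + 2) * p (m + 1) i j +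
      1 / (m + 2) * ((𝔼 ω : Omega m, (inflow ω i j : ℝ)) / (m + 1)) := by
  have hsnoc : ∀ ω : Omega m, 𝔼 u, (numJointEq (m + 1) (ω.snoc u) i j : ℝ) =
      (m * numJointEq m ω i j + inflow ω i j) / (m + 1) := fun ω => by
    rw [Fintype.expect_eq_sum_div_card, ← Nat.cast_sum, sum_numJointEq_snoc]
    simp
  rw [p_succ (m + 1), Omega.expect_succ, p_succ]
  simp only [hsnoc, ← expect_div, expect_add_distrib, ← mul_expect]
  push_cast
  field_simp
  ring

theorem joint_recurrence_general (n i j : ℕ) (hn : 3 ≤ n) :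
    (p n 0 0 = (((n : ℝ) - 2) / n) * p (n - 1) 0 0) ∧
    (1 ≤ j → p n 0 j = (((n : ℝ) - 2) / n) * p (n - 1) 0 j +
        (1 / n) * ∑ i' ∈ Finset.range (n - 1), p (n - 1) i' (j - 1)) ∧
    (1 ≤ i → p n i j = (((n : ℝ) - 2) / n) * p (n - 1) i j +
        (1 / n) * p (n - 1) (i - 1) j) := by
  obtain ⟨m, rfl⟩ : ∃ m, n = m + 2 := ⟨n - 2, by omega⟩
  have hpred : m + 2 - 1 = m + 1 := rfl
  have hcoeff : ((m + 2 : ℕ) : ℝ) - 2 = m := by push_cast; ring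
  rw [hpred, hcoeff, Nat.cast_add, Nat.cast_ofNat]
  refine ⟨by simp [p_add_two, inflow_zero_zero], fun hj => ?_, fun hi => ?_⟩
  · obtain ⟨j, rfl⟩ : ∃ j', j = j' + 1 := ⟨j - 1, by omega⟩
    simp only [p_add_two, inflow_zero_succ, ← sum_p_succ, Nat.add_sub_cancel]
  · obtain ⟨i, rfl⟩ : ∃ i', i = i' + 1 := ⟨i - 1, by omega⟩
    simp only [p_add_two, inflow_succ, ← p_succ, Nat.add_sub_cancel]

/-- the joint quantities `p_n(i,j)` satisfy
`p_n(0,j) = ((n-2)/n)·p_{n-1}(0,j) + (1/n)·g_{n-1}(j-1)` and, for `i ≥ 1`,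
`p_n(i,j) = ((n-2)/n)·p_{n-1}(i,j) + (1/n)·p_{n-1}(i-1,j)`, valid for `n ≥ 3`
and `0 ≤ i, j ≤ n-1`, where `g_{n-1}(j-1) = Σ_{i=0}^{n-2} p_{n-1}(i, j-1)` and
`p_{n-1}(i,-1) = 0` (so the `g`-term vanishes when `j = 0`). -/
theorem joint_recurrence (n i j : ℕ) (hn : 3 ≤ n) (hi : i ≤ n - 1) (hj : j ≤ n - 1) :
    (p n 0 0 = (((n : ℝ) - 2) / n) * p (n - 1) 0 0) ∧
    (1 ≤ j → p n 0 j = (((n : ℝ) - 2) / n) * p (n - 1) 0 j +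
        (1 / n) * ∑ i' ∈ Finset.range (n - 1), p (n - 1) i' (j - 1)) ∧
    (1 ≤ i → p n i j = (((n : ℝ) - 2) / n) * p (n - 1) i j +
        (1 / n) * p (n - 1) (i - 1) j) :=
  joint_recurrence_general n i j hn
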